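/- Let F*A be a twisted group algebra of a finitely generated free abelian group A over a field F. Suppose E₁ and C₀ are subgroups of A such that F*E₁ and F*C₀ are both commutative, the intersection E₁ ∩ C₀ is nontrivial, and the product E₁C₀ has finite index in A. Then the center of F*A strictly contains F. -/

import Mathlib

open Module Filter ENNReal

/-- A twisted group algebra `F*A` of the (additive) abelian group `A` over the field `F`:
the `F`-algebra `R` is free as an `F`-module with basis `{of a : a ∈ A}`, the basis elements
multiply according to a 2-cocycle with values in `Fˣ`, and the scalars of `F` are central
(built into the `Algebra F R` structure). -/
structure TwistedGroupAlgebra (F : Type*) [Field F] (A : Type*) [AddCommGroup A]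
    (R : Type*) [Ring R] [Algebra F R] where
  of : A → R
  basis : Basis A F R
  basis_eq : ∀ a : A, basis a = of a
  cocycle : A → A → Fˣ
  of_mul : ∀ a b : A, of a * of b = (cocycle a b : F) • of (a + b)
  of_zero : of 0 = 1

namespace TwistedGroupAlgebra

variable {F A R : Type*} [Field F] [AddCommGroup A] [Ring R] [Algebra F R]

/-- The subalgebra `F*C` of `F*A` determined by a subgroup `C ≤ A`, as the `F`-linear span
of the basis elements coming from `C`. -/
def sub (T : TwistedGroupAlgebra F A R) (C : AddSubgroup A) : Submodule F R :=
  Submodule.span F (T.of '' (C : Set A))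

/-- `F*C` is commutative. -/
def IsCommutativeOn (T : TwistedGroupAlgebra F A R) (C : AddSubgroup A) : Prop :=
  ∀ c₁ ∈ C, ∀ c₂ ∈ C, Commute (T.of c₁) (T.of c₂)

/-- `M` is finitely generated as an `F*C`-module: there is a finite subset `s` of `M` such that
the `F`-span of `{ c̄ • m : c ∈ C, m ∈ s }` (that is, the `F*C`-submodule generated by `s`)
is all of `M`. -/
def FGOn (T : TwistedGroupAlgebra F A R) (C : AddSubgroup A)
    (M : Type*) [AddCommGroup M] [Module R M] [Module F M] : Prop :=
  ∃ s : Finset M, Submodule.span F {x : M | ∃ c ∈ C, ∃ m ∈ s, x = T.of c • m} = ⊤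

/-- `M` is torsion-free as an `F*C`-module: no nonzero element of `M` is annihilated by a
nonzero element of `F*C`. -/
def TorsionFreeOn (T : TwistedGroupAlgebra F A R) (C : AddSubgroup A)
    (M : Type*) [AddCommGroup M] [Module R M] : Prop :=
  ∀ β ∈ T.sub C, ∀ m : M, β • m = 0 → β = 0 ∨ m = 0

/-- `M` is `F*C`-torsion: every element of `M` is annihilated by some nonzero element
of `F*C`. -/
def IsTorsionOn (T : TwistedGroupAlgebra F A R) (C : AddSubgroup A)
    (M : Type*) [AddCommGroup M] [Module R M] : Prop :=
  ∀ m : M, ∃ β ∈ T.sub C, β ≠ 0 ∧ β • m = 0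

end TwistedGroupAlgebra

/-- The Gelfand–Kirillov dimension of a module `M` over an `F`-algebra `R`: the supremum over
finite-dimensional `F`-subspaces `V ≤ R` and `W ≤ M` of `limsup_n log dim_F (Vⁿ·W) / log n`. -/
noncomputable def gkDim (F : Type*) [Field F] (R : Type*) [Ring R] [Algebra F R]
    (M : Type*) [AddCommGroup M] [Module R M] [Module F M] [IsScalarTower F R M] : ℝ≥0∞ :=
  ⨆ (V : Submodule F R) (_ : V.FG) (W : Submodule F M) (_ : W.FG),
    Filter.limsup
      (fun n : ℕ =>
        ENNReal.ofReal
          (Real.log (Module.finrank F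
            ↥(Submodule.span F (Set.image2 (· • ·) ((V ^ n : Submodule F R) : Set R) (W : Set M))))
           / Real.log n))
      Filter.atTop

/-!
Write `μ(a, b) ∈ Fˣ` for the scalar with `ā b̄ = μ(a, b) b̄ ā`. Associativity makes `μ(a, ·)` a
character of `A`, and `μ(b, a) = μ(a, b)⁻¹`, so `μ(n • a, b) = μ(a, b) ^ n = μ(a, n • b)`.
For `a ≠ 0` in `E₁ ∩ C₀` the character `μ(a, ·)` is trivial on `E₁ + C₀`, which contains `n • b`
for every `b` when `n` is its index. Hence the basis element of `n • a ≠ 0` commutes with every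
basis element, so it is central, and it is not a scalar.
-/

namespace TwistedGroupAlgebra

variable {F A R : Type*} [Field F] [AddCommGroup A] [Ring R] [Algebra F R]
variable (T : TwistedGroupAlgebra F A R)

lemma of_ne_zero (a : A) : T.of a ≠ 0 := by
  rw [← T.basis_eq]
  exact T.basis.ne_zero a

lemma of_mul_of_ne_zero (a b : A) : T.of a * T.of b ≠ 0 := by
  rw [T.of_mul]
  exact smul_ne_zero (Units.ne_zero _) (T.of_ne_zero _)

noncomputable def commutatorScalar (a b : A) : Fˣ := T.cocycle a b / T.cocycle b a

lemma of_mul_of_eq_smul (a b : A) :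
    T.of a * T.of b = (T.commutatorScalar a b : F) • (T.of b * T.of a) := by
  rw [T.of_mul, T.of_mul, add_comm b a, smul_smul, commutatorScalar, Units.val_div_eq_div_val,
    div_mul_cancel₀ _ (Units.ne_zero _)]

lemma commutatorScalar_swap (a b : A) :
    T.commutatorScalar b a = (T.commutatorScalar a b)⁻¹ := by
  rw [commutatorScalar, commutatorScalar, inv_div]

lemma commute_of_iff (a b : A) :
    Commute (T.of a) (T.of b) ↔ T.commutatorScalar a b = 1 := by
  rw [Commute, SemiconjBy, T.of_mul_of_eq_smul, ← Units.val_eq_one]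
  conv_lhs => rhs; rw [← one_smul F (T.of b * T.of a)]
  exact (smul_left_injective F (T.of_mul_of_ne_zero b a)).eq_iff

lemma of_mul_of_mul_of_eq_smul (a b c : A) :
    T.of a * (T.of b * T.of c) =
      (T.commutatorScalar a b * T.commutatorScalar a c : F) • (T.of b * T.of c * T.of a) := by
  rw [← mul_assoc, T.of_mul_of_eq_smul a b, smul_mul_assoc, mul_assoc, T.of_mul_of_eq_smul a c,
    mul_smul_comm, smul_smul, mul_assoc]

lemma commutatorScalar_add_right (a b c : A) :
    T.commutatorScalar a (b + c) = T.commutatorScalar a b * T.commutatorScalar a c := by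
  have hbca : T.of b * T.of c * T.of a ≠ 0 := by
    rw [T.of_mul b c, smul_mul_assoc]
    exact smul_ne_zero (Units.ne_zero _) (T.of_mul_of_ne_zero _ _)
  have h : T.of a * (T.of b * T.of c) =
      (T.commutatorScalar a (b + c) : F) • (T.of b * T.of c * T.of a) := by
    rw [T.of_mul b c, mul_smul_comm, T.of_mul_of_eq_smul, smul_mul_assoc, smul_comm]
  exact Units.val_injective <| smul_left_injective F hbca <|
    h.symm.trans (by rw [Units.val_mul, T.of_mul_of_mul_of_eq_smul])

noncomputable def commutatorChar (a : A) : AddChar A Fˣ where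
  toFun := T.commutatorScalar a
  map_zero_eq_one' := (T.commute_of_iff a 0).1 (T.of_zero ▸ Commute.one_right _)
  map_add_eq_mul' := T.commutatorScalar_add_right a

lemma commutatorScalar_nsmul_left (n : ℕ) (a b : A) :
    T.commutatorScalar (n • a) b = T.commutatorScalar a (n • b) :=
  calc T.commutatorScalar (n • a) b = (T.commutatorScalar b (n • a))⁻¹ :=
        T.commutatorScalar_swap b (n • a)
    _ = (T.commutatorScalar b a ^ n)⁻¹ := congrArg _ ((T.commutatorChar b).map_nsmul_eq_pow n a)
    _ = T.commutatorScalar a b ^ n := by rw [T.commutatorScalar_swap b a, inv_pow]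
    _ = T.commutatorScalar a (n • b) := ((T.commutatorChar a).map_nsmul_eq_pow n b).symm

lemma commute_of_nsmul_left_iff (n : ℕ) (a b : A) :
    Commute (T.of (n • a)) (T.of b) ↔ Commute (T.of a) (T.of (n • b)) := by
  rw [T.commute_of_iff, T.commute_of_iff, T.commutatorScalar_nsmul_left]

noncomputable def centralizer (a : A) : AddSubgroup A := (T.commutatorChar a).toAddMonoidHom.ker

lemma mem_centralizer {a b : A} : b ∈ T.centralizer a ↔ Commute (T.of a) (T.of b) := by
  rw [centralizer, AddMonoidHom.mem_ker, AddChar.toAddMonoidHom_apply, ofMul_eq_zero,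
    T.commute_of_iff]
  rfl

lemma of_mem_center {a : A} (h : ∀ b, Commute (T.of a) (T.of b)) :
    T.of a ∈ Subalgebra.center F R := by
  have hmul : LinearMap.mulLeft F (T.of a) = LinearMap.mulRight F (T.of a) :=
    T.basis.ext fun b => by simpa [T.basis_eq] using (h b).eq
  exact Subalgebra.mem_center_iff.2 fun r => (LinearMap.congr_fun hmul r).symm

lemma of_notMem_bot {a : A} (ha : a ≠ 0) : T.of a ∉ (⊥ : Subalgebra F R) := by
  rw [Algebra.mem_bot]
  rintro ⟨c, hc⟩
  have h : T.basis a = c • T.basis 0 := by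
    rw [T.basis_eq, T.basis_eq, T.of_zero, ← hc, Algebra.algebraMap_eq_smul_one]
  simpa [Finsupp.single_apply, ha] using congrArg (fun r => T.basis.repr r a) h

end TwistedGroupAlgebra

theorem center_gt_of_commutative_virtual_cover_general
    {F A R : Type*} [Field F]
    [AddCommGroup A] [Module.Free ℤ A]
    [Ring R] [Algebra F R] (T : TwistedGroupAlgebra F A R)
    (E₁ C₀ : AddSubgroup A)
    (hE₁ : T.IsCommutativeOn E₁) (hC₀ : T.IsCommutativeOn C₀)
    (hint : E₁ ⊓ C₀ ≠ ⊥) (hidx : (E₁ ⊔ C₀).FiniteIndex) :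
    ⊥ < Subalgebra.center F R := by
  obtain ⟨a, ⟨haE, haC⟩, ha⟩ := (E₁ ⊓ C₀).bot_or_exists_ne_zero.resolve_left hint
  have hcover : E₁ ⊔ C₀ ≤ T.centralizer a :=
    sup_le (fun b hb => T.mem_centralizer.2 (hE₁ a haE b hb))
      (fun b hb => T.mem_centralizer.2 (hC₀ a haC b hb))
  set n := (E₁ ⊔ C₀).index
  have hcentral : T.of (n • a) ∈ Subalgebra.center F R := T.of_mem_center fun b =>
    (T.commute_of_nsmul_left_iff n a b).2 <| T.mem_centralizer.1 <|
      hcover (AddSubgroup.nsmul_index_mem _ b)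
  have hna : n • a ≠ 0 := by
    rw [← natCast_zsmul]
    exact smul_ne_zero (Int.natCast_ne_zero.2 hidx.index_ne_zero) ha
  exact SetLike.lt_iff_le_and_exists.2 ⟨bot_le, _, hcentral, T.of_notMem_bot hna⟩

/-- If `E₁, C₀ ≤ A` are subgroups with `F*E₁` and `F*C₀` commutative, `E₁ ∩ C₀` nontrivial and
`E₁C₀` of finite index in `A`, then the center of the twisted group algebra `F*A` strictly
contains `F`. -/
theorem center_gt_of_commutative_virtual_cover
    {F A R : Type*} [Field F]
    [AddCommGroup A] [Module.Free ℤ A] [Module.Finite ℤ A]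
    [Ring R] [Algebra F R] (T : TwistedGroupAlgebra F A R)
    (E₁ C₀ : AddSubgroup A)
    (hE₁ : T.IsCommutativeOn E₁) (hC₀ : T.IsCommutativeOn C₀)
    (hint : E₁ ⊓ C₀ ≠ ⊥) (hidx : (E₁ ⊔ C₀).FiniteIndex) :
    ⊥ < Subalgebra.center F R :=
  center_gt_of_commutative_virtual_cover_general T E₁ C₀ hE₁ hC₀ hint hidx
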